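/- Let Q, H ∈ ℝ^{d×d} be symmetric matrices and C, y ∈ ℝ. Then for every symmetric positive semi-definite matrix X with ⟨X, H⟩ = C, the SDLS dual objective satisfies the weak duality inequality −‖[Q + yH]_+‖_F² + 2Cy + ‖Q‖_F² ≤ ‖X − Q‖_F². Consequently, if there exists y ∈ ℝ with −‖[Q + yH]_+‖_F² + 2y + ‖Q‖_F² > r² for some r ≥ 0, then there is no positive semi-definite X with ⟨X, H⟩ = 1 and ‖X − Q‖_F ≤ r. -/

import Mathlib

/-!
Writing `Q + yH = P + N` with `−N ⪰ 0`, any `X ⪰ 0` with `⟨X, H⟩ = C` satisfies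
`⟨X, N⟩ ≤ 0`, since the trace of a product of positive semi-definite matrices is
nonnegative. Expanding the square then gives
`‖X − Q‖² = ‖X − P‖² − ‖P‖² + 2Cy − 2⟨X, N⟩ + ‖Q‖² ≥ −‖P‖² + 2Cy + ‖Q‖²`,
which is an inequality in any real inner product space; the Frobenius inner product is
the Euclidean one on the vectorisation of a matrix. The certificate follows with `C = 1`.
-/

open scoped BigOperators
open scoped Matrix

/-- Frobenius inner product ⟨A,B⟩ = tr(Aᵀ B). -/
noncomputable def frob {d : ℕ} (A B : Matrix (Fin d) (Fin d) ℝ) : ℝ :=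
  Matrix.trace (Aᵀ * B)

/-- Frobenius norm ‖A‖_F = √⟨A,A⟩. -/
noncomputable def frobNorm {d : ℕ} (A : Matrix (Fin d) (Fin d) ℝ) : ℝ :=
  Real.sqrt (frob A A)

open scoped RealInnerProductSpace

theorem le_norm_sub_sq_of_add_smul_eq_add {E : Type*} [NormedAddCommGroup E]
    [InnerProductSpace ℝ E] {q h p n u : E} {y C : ℝ} (hdecomp : q + y • h = p + n)
    (hn : ⟪u, n⟫ ≤ 0) (hC : ⟪u, h⟫ = C) :
    -‖p‖ ^ 2 + 2 * C * y + ‖q‖ ^ 2 ≤ ‖u - q‖ ^ 2 := by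
  have hpq : p - q = y • h - n := by linear_combination (norm := module) -hdecomp
  have hinner : ⟪u, p - q⟫ = y * C - ⟪u, n⟫ := by
    rw [hpq, inner_sub_right, real_inner_smul_right, hC]
  calc -‖p‖ ^ 2 + 2 * C * y + ‖q‖ ^ 2
      ≤ ‖u - p‖ ^ 2 - ‖p‖ ^ 2 + 2 * ⟪u, p - q⟫ + ‖q‖ ^ 2 := by linarith [sq_nonneg ‖u - p‖]
    _ = ‖u - q‖ ^ 2 := by rw [norm_sub_sq_real, norm_sub_sq_real, inner_sub_right]; ring

theorem Matrix.PosSemidef.trace_mul_nonneg {n : Type*} [Fintype n]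
    {A B : Matrix n n ℝ} (hA : A.PosSemidef) (hB : B.PosSemidef) : 0 ≤ (A * B).trace := by
  classical
  open scoped MatrixOrder in
  obtain ⟨S, rfl⟩ := CStarAlgebra.nonneg_iff_eq_star_mul_self.mp hB.nonneg
  rw [← Matrix.mul_assoc, Matrix.trace_mul_comm, ← Matrix.mul_assoc]
  exact (hA.mul_mul_conjTranspose_same S).trace_nonneg

theorem frob_nonneg {d : ℕ} {A B : Matrix (Fin d) (Fin d) ℝ} (hA : A.PosSemidef)
    (hB : B.PosSemidef) : 0 ≤ frob A B := by
  rw [frob, ← Matrix.conjTranspose_eq_transpose_of_trivial, hA.isHermitian.eq]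
  exact hA.trace_mul_nonneg hB

def frobVec {d : ℕ} : Matrix (Fin d) (Fin d) ℝ →ₗ[ℝ] EuclideanSpace ℝ (Fin d × Fin d) where
  toFun A := WithLp.toLp 2 A.vec
  map_add' _ _ := rfl
  map_smul' _ _ := rfl

theorem frobVec_apply {d : ℕ} (A : Matrix (Fin d) (Fin d) ℝ) :
    frobVec A = WithLp.toLp 2 A.vec :=
  rfl

theorem frob_eq_inner_frobVec {d : ℕ} (A B : Matrix (Fin d) (Fin d) ℝ) :
    frob A B = ⟪frobVec A, frobVec B⟫ := by
  rw [frobVec_apply, frobVec_apply, EuclideanSpace.inner_toLp_toLp, star_trivial,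
    dotProduct_comm, Matrix.vec_dotProduct_vec, frob]

theorem frobNorm_eq_norm_frobVec {d : ℕ} (A : Matrix (Fin d) (Fin d) ℝ) :
    frobNorm A = ‖frobVec A‖ := by
  rw [frobNorm, frob_eq_inner_frobVec, real_inner_self_eq_norm_sq, Real.sqrt_sq (norm_nonneg _)]

theorem sdls_dual_le_frobNorm_sub_sq {d : ℕ} {Q H P N X : Matrix (Fin d) (Fin d) ℝ} {C y : ℝ}
    (hdecomp : Q + y • H = P + N) (hN : (-N).PosSemidef) (hX : X.PosSemidef)
    (hXH : frob X H = C) :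
    -(frobNorm P ^ 2) + 2 * C * y + frobNorm Q ^ 2 ≤ frobNorm (X - Q) ^ 2 := by
  have hvec : frobVec Q + y • frobVec H = frobVec P + frobVec N := by
    simpa only [map_add, map_smul] using congrArg frobVec hdecomp
  have hXN : ⟪frobVec X, frobVec N⟫ ≤ 0 := by
    have := frob_nonneg hX hN
    rwa [frob_eq_inner_frobVec, map_neg, inner_neg_right, neg_nonneg] at this
  simp only [frobNorm_eq_norm_frobVec, map_sub]
  exact le_norm_sub_sq_of_add_smul_eq_add hvec hXN (by rw [← frob_eq_inner_frobVec, hXH])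

theorem sdls_weak_duality {d : ℕ} (Q H Qyplus Qyminus : Matrix (Fin d) (Fin d) ℝ)
    (C y : ℝ)
    (hdecomp : Q + y • H = Qyplus + Qyminus)
    (hminus : (-Qyminus).PosSemidef) :
    (∀ X : Matrix (Fin d) (Fin d) ℝ, X.PosSemidef → frob X H = C →
      -(frobNorm Qyplus ^ 2) + 2 * C * y + frobNorm Q ^ 2 ≤ frobNorm (X - Q) ^ 2) ∧
    (∀ r : ℝ, 0 ≤ r →
      -(frobNorm Qyplus ^ 2) + 2 * y + frobNorm Q ^ 2 > r ^ 2 →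
      ¬ ∃ X : Matrix (Fin d) (Fin d) ℝ,
        X.PosSemidef ∧ frob X H = 1 ∧ frobNorm (X - Q) ≤ r) := by
  refine ⟨fun X hX hXH => sdls_dual_le_frobNorm_sub_sq hdecomp hminus hX hXH, ?_⟩
  rintro r - hgt ⟨X, hX, hXH, hle⟩
  have hdual := sdls_dual_le_frobNorm_sub_sq hdecomp hminus hX hXH
  have hsq : frobNorm (X - Q) ^ 2 ≤ r ^ 2 := pow_le_pow_left₀ (Real.sqrt_nonneg _) hle 2
  linarith
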